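/- Let (V,E) be a connected graph with connection ∇, sign function ε and invariant function c, and let u ∈ V. Then the evaluation map A(Γ) → ℤ star(u), f ↦ f_u, is a group isomorphism from the group of axial functions A(Γ) onto the subgroup (ℤ star(u))^{π₁(Γ,u)} of elements fixed by the A-monodromy representation of the edge-path group π₁(Γ,u). -/

import Mathlib

attribute [local instance] Classical.propDecidable

/-- A graph with directed edges `E`, vertices `V`, edge reversal, and a
(combinatorial) connection `conn`, where `conn e e'` is the transport of an
edge `e'` with `ini e' = ini e` along the edge `e`. -/
structure ConnGraph (V : Type*) (E : Type*) where
  ini : E → V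
  ter : E → V
  rev : E → E
  rev_ini : ∀ e, ini (rev e) = ter e
  rev_ter : ∀ e, ter (rev e) = ini e
  rev_rev : ∀ e, rev (rev e) = e
  conn : E → E → E
  conn_ini : ∀ e e', ini e' = ini e → ini (conn e e') = ter e
  conn_self : ∀ e, conn e e = rev e
  conn_inv : ∀ e e', ini e' = ini e → conn (rev e) (conn e e') = e'

namespace ConnGraph

variable {V E : Type*} (G : ConnGraph V E)

/-- One step of adjacency along an edge. -/
def Step (a b : V) : Prop := ∃ e : E, G.ini e = a ∧ G.ter e = b

/-- The graph is connected. -/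
def Connected : Prop := ∀ a b : V, Relation.ReflTransGen G.Step a b

/-- The graph is `n`-valent: every star has exactly `n` edges. -/
def NValent (n : ℕ) : Prop := ∀ v : V, {e : E | G.ini e = v}.ncard = n

/-- A sign function on a graph with connection: `ε e e'` plays the role of
`⟨ε(e), e'⟩` for `e'` in the star of `ini e`. -/
def IsSignFunction (ε : E → E → ℤ) : Prop :=
  (∀ e e' : E, G.ini e' = G.ini e → ε e e' = 1 ∨ ε e e' = -1) ∧
  (∀ e : E, ε e e = 1) ∧
  (∀ e e' : E, G.ini e' = G.ini e → ε (G.rev e) (G.conn e e') = ε e e')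

/-- An invariant function (relative to a sign function): `c e e'` plays the
role of `⟨c(e), e'⟩`. -/
def IsInvariantFunction (ε c : E → E → ℤ) : Prop :=
  (∀ e : E, c e e = -2) ∧
  (∀ e e' : E, G.ini e' = G.ini e →
    c e e' = ε (G.rev e) (G.conn e e') * c (G.rev e) (G.conn e e'))

/-- A label function: an element of the group `L(Γ)`. -/
def IsLabelFunction (ε c : E → E → ℤ) (a : E → ℤ) : Prop :=
  ∀ e e' : E, G.ini e' = G.ini e →
    a (G.conn e e') = ε e e' * a e' + c e e' * a e

/-- `x : E → ℤ` represents an element of `ℤ star(v)`: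
it is supported on the star of `v`. -/
def StarSupported (v : V) (x : E → ℤ) : Prop := ∀ e : E, G.ini e ≠ v → x e = 0

/-- An element of the group of axial functions `A(Γ)`: a tuple `(f v)_{v ∈ V}`
with `f v ∈ ℤ star(v)`, satisfying `f (t e) = φ_e (f (i e))` for every edge. -/
def IsAxialTuple (ε c : E → E → ℤ) (f : V → E → ℤ) : Prop :=
  (∀ v : V, G.StarSupported v (f v)) ∧
  (∀ e e' : E, G.ini e' = G.ini e →
    f (G.ter e) (G.conn e e') = ε e e' * f (G.ini e) e' + f (G.ini e) e * c e e')

/-- The map `φ_e : ℤ star(i e) → ℤ star(t e)`,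
`φ_e(x) = ∇_e (ε(e)·x + ⟨x, e⟩·c(e))`. -/
noncomputable def phi (ε c : E → E → ℤ) (e : E) (x : E → ℤ) : E → ℤ := fun e'' =>
  if G.ini e'' = G.ter e then
    ε e (G.conn (G.rev e) e'') * x (G.conn (G.rev e) e'') +
      x e * c e (G.conn (G.rev e) e'')
  else 0

/-- `φ_γ` for an edge path `γ = (e₁, …, e_q)`: the composite
`φ_{e_q} ∘ ⋯ ∘ φ_{e₁}`. -/
noncomputable def phiList (ε c : E → E → ℤ) : List E → (E → ℤ) → (E → ℤ)
  | [], x => x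
  | e :: l, x => phiList ε c l (G.phi ε c e x)

/-- The parallel transport (monodromy) operator `Π_γ = ∇_{e_q} ∘ ⋯ ∘ ∇_{e₁}`
along an edge path, on edges. -/
def transportList : List E → E → E
  | [], x => x
  | e :: l, x => transportList l (G.conn e x)

/-- `IsPath u w l`: the list of edges `l` is an edge path from `u` to `w`. -/
def IsPath : V → V → List E → Prop
  | u, w, [] => u = w
  | u, w, e :: l => G.ini e = u ∧ IsPath (G.ter e) w l

/-- Elementary homotopy of edge paths: deletion of a backtrack `(e, ē)`. -/
inductive HomotopyStep : List E → List E → Prop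
  | backtrack (l₁ l₂ : List E) (e : E) :
      HomotopyStep (l₁ ++ e :: G.rev e :: l₂) (l₁ ++ l₂)

/-- Homotopy of edge paths: the equivalence relation generated by insertion
and deletion of backtracks. -/
def Homotopic : List E → List E → Prop := Relation.EqvGen G.HomotopyStep

/-- A 2-face: a nonempty connected 2-valent subgraph (given by its set of
edges, closed under reversal) which is invariant under the connection. -/
def IsTwoFace (F : Set E) : Prop :=
  F.Nonempty ∧
  (∀ e ∈ F, G.rev e ∈ F) ∧
  (∀ e ∈ F, {e' : E | e' ∈ F ∧ G.ini e' = G.ini e}.ncard = 2) ∧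
  (∀ e ∈ F, ∀ e' ∈ F, G.ini e' = G.ini e → G.conn e e' ∈ F) ∧
  (∀ e ∈ F, ∀ e' ∈ F, ∃ l : List E,
    (∀ x ∈ l, x ∈ F) ∧ G.IsPath (G.ini e) (G.ini e') l)

/-- `f` is a boundary cycle of the 2-face `F`, based at `w`: a closed edge
path at `w` traversing each geometric edge of `F` exactly once. -/
def IsFaceBoundary (F : Set E) (w : V) (f : List E) : Prop :=
  G.IsTwoFace F ∧ f ≠ [] ∧ G.IsPath w w f ∧ (∀ e ∈ f, e ∈ F) ∧
  f.Nodup ∧ (∀ e ∈ f, G.rev e ∉ f) ∧ (∀ e ∈ F, e ∈ f ∨ G.rev e ∈ f)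

/-- A conjugated 2-face at the base vertex `v`: a loop of the form
`g · f · g⁻¹` where `g` is an edge path from `v` and `f` is a boundary cycle
of a 2-face based at the endpoint of `g`. -/
def ConjFaceLoop (v : V) (l : List E) : Prop :=
  ∃ (w : V) (g f : List E) (F : Set E),
    G.IsPath v w g ∧ G.IsFaceBoundary F w f ∧
    l = g ++ f ++ (g.reverse.map G.rev)

/-- The conjugated 2-faces generate the fundamental group (the edge-path
group): every closed edge path is homotopic to a concatenation of conjugated
2-face loops. -/
def FacesGeneratePi1 : Prop :=
  ∀ (v : V) (l : List E), G.IsPath v v l →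
    ∃ ls : List (List E), (∀ m ∈ ls, G.ConjFaceLoop v m) ∧
      G.Homotopic l ls.flatten

end ConnGraph

/-- `(G, lab)` is an abstract unsigned GKM graph, where `lab` is a chosen lift
`α̃ : E → ℤ^k` of the unsigned axial function `α : E → ℤ^k/±1`. -/
structure IsUnsignedGKM {V E : Type*} (G : ConnGraph V E) {k : ℕ}
    (lab : E → Fin k → ℤ) : Prop where
  connected : G.Connected
  lab_ne : ∀ e : E, lab e ≠ 0
  lab_rev : ∀ e : E, lab (G.rev e) = -lab e
  indep₂ : ∀ e e' : E, G.ini e' = G.ini e → e ≠ e' →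
    LinearIndependent ℚ ![(fun j => (lab e j : ℚ)), (fun j => (lab e' j : ℚ))]
  congru : ∀ e e' : E, G.ini e' = G.ini e →
    ∃ s m : ℤ, (s = 1 ∨ s = -1) ∧ lab (G.conn e e') = s • lab e' + m • lab e

/-- The GKM₃ condition: any three labels at a common vertex are linearly
independent over `ℚ`. -/
def IsGKM3 {V E : Type*} (G : ConnGraph V E) {k : ℕ} (lab : E → Fin k → ℤ) : Prop :=
  ∀ e₁ e₂ e₃ : E, G.ini e₂ = G.ini e₁ → G.ini e₃ = G.ini e₁ →
    e₁ ≠ e₂ → e₁ ≠ e₃ → e₂ ≠ e₃ →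
    LinearIndependent ℚ
      ![(fun j => (lab e₁ j : ℚ)), (fun j => (lab e₂ j : ℚ)),
        (fun j => (lab e₃ j : ℚ))]

/-- `(ε, c)` are the sign and integer data associated to the lift `lab` of the
axial function, via the congruence relation
`α̃(∇_e e') = ⟨ε(e),e'⟩·α̃(e') + ⟨c(e),e'⟩·α̃(e)`, normalized by
`⟨ε(e),e⟩ = 1` and `⟨c(e),e⟩ = -2`. -/
def IsCompatibleData {V E : Type*} (G : ConnGraph V E) {k : ℕ}
    (lab : E → Fin k → ℤ) (ε c : E → E → ℤ) : Prop :=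
  (∀ e e' : E, G.ini e' = G.ini e → ε e e' = 1 ∨ ε e e' = -1) ∧
  (∀ e : E, ε e e = 1) ∧ (∀ e : E, c e e = -2) ∧
  (∀ e e' : E, G.ini e' = G.ini e →
    lab (G.conn e e') = ε e e' • lab e' + c e e' • lab e)

/-- The axial function is almost effective: the `ℤ`-span of its image has
finite index in `ℤ^k`. -/
def AlmostEffective {E : Type*} {k : ℕ} (lab : E → Fin k → ℤ) : Prop :=
  (Submodule.span ℤ (Set.range lab)).toAddSubgroup.index ≠ 0

/-- The axial function is effective: the `ℤ`-span of its image is all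
of `ℤ^k`. -/
def Effective {E : Type*} {k : ℕ} (lab : E → Fin k → ℤ) : Prop :=
  Submodule.span ℤ (Set.range lab) = ⊤

/-! Because `⟨ε(e), e⟩ = 1`, `⟨c(e), e⟩ = -2` and `ε² = 1`, the map `φ_ē` inverts `φ_e` on
`ℤ star(i e)`, so transporting along a path and back along its reverse is the identity. Hence a
monodromy-fixed `x ∈ ℤ star(u)` transports to every vertex independently of the path, and the
resulting tuple is axial; conversely, by connectedness an axial tuple is determined by its value
at `u`. -/

namespace ConnGraph

variable {V E : Type*} {G : ConnGraph V E}

theorem IsPath.append {a b d : V} {l m : List E} (hl : G.IsPath a b l) (hm : G.IsPath b d m) :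
    G.IsPath a d (l ++ m) := by
  induction l generalizing a with
  | nil => cases hl; exact hm
  | cons e t ih => exact ⟨hl.1, ih hl.2⟩

theorem IsPath.reverse_map_rev {a b : V} {l : List E} (hl : G.IsPath a b l) :
    G.IsPath b a (l.reverse.map G.rev) := by
  induction l generalizing a with
  | nil => cases hl; rfl
  | cons e t ih =>
    rw [List.reverse_cons, List.map_append]
    exact (ih hl.2).append ⟨G.rev_ini e, by simpa [IsPath, G.rev_ter] using hl.1⟩

theorem exists_isPath_of_reflTransGen {a b : V} (h : Relation.ReflTransGen G.Step a b) :
    ∃ l : List E, G.IsPath a b l := by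
  induction h with
  | refl => exact ⟨[], rfl⟩
  | tail _ hstep ih =>
    obtain ⟨l, hl⟩ := ih
    obtain ⟨e, rfl, rfl⟩ := hstep
    exact ⟨l ++ [e], hl.append ⟨rfl, rfl⟩⟩

variable (G) (ε c : E → E → ℤ)

theorem rev_map_reverse_rev_map_reverse (l : List E) :
    ((l.reverse.map G.rev).reverse.map G.rev) = l := by
  simp [List.map_reverse, Function.comp_def, G.rev_rev]

theorem phiList_append (l m : List E) (x : E → ℤ) :
    G.phiList ε c (l ++ m) x = G.phiList ε c m (G.phiList ε c l x) := by
  induction l generalizing x with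
  | nil => rfl
  | cons e t ih => exact ih _

theorem starSupported_phi (e : E) (x : E → ℤ) : G.StarSupported (G.ter e) (G.phi ε c e x) := by
  intro e'' h
  simp [phi, h]

theorem starSupported_phiList {a b : V} {l : List E} {x : E → ℤ} (hl : G.IsPath a b l)
    (hx : G.StarSupported a x) : G.StarSupported b (G.phiList ε c l x) := by
  induction l generalizing a x with
  | nil => cases hl; exact hx
  | cons e t ih => exact ih hl.2 (G.starSupported_phi ε c e x)

theorem phi_conn {e e' : E} (h : G.ini e' = G.ini e) (x : E → ℤ) :
    G.phi ε c e x (G.conn e e') = ε e e' * x e' + x e * c e e' := by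
  simp only [phi, G.conn_ini e e' h, G.conn_inv e e' h, if_true]

variable {G ε c}

theorem phi_rev_phi (hε : G.IsSignFunction ε) (hc : G.IsInvariantFunction ε c) {e : E}
    {x : E → ℤ} (hx : G.StarSupported (G.ini e) x) :
    G.phi ε c (G.rev e) (G.phi ε c e x) = x := by
  funext e'
  by_cases h : G.ini e' = G.ini e
  · have hself : G.phi ε c e x (G.rev e) = -x e := by
      rw [← G.conn_self, G.phi_conn ε c rfl, hε.2.1 e, hc.1 e]
      ring
    have hsq : ε e e' * ε e e' = 1 := by
      rcases hε.1 e e' h with hs | hs <;> rw [hs] <;> norm_num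
    have hback := G.phi_conn ε c (e := G.rev e) (e' := G.conn e e')
      (by rw [G.conn_ini e e' h, G.rev_ini]) (G.phi ε c e x)
    rw [G.conn_inv e e' h] at hback
    rw [hback, G.phi_conn ε c h, hself, hc.2 e e' h, hε.2.2 e e' h]
    linear_combination (x e' + x e * c (G.rev e) (G.conn e e')) * hsq
  · simp only [phi, G.rev_ter, h, if_false]
    exact (hx e' h).symm

theorem phiList_reverse_map_rev_phiList (hε : G.IsSignFunction ε)
    (hc : G.IsInvariantFunction ε c) {a b : V} {l : List E} {x : E → ℤ} (hl : G.IsPath a b l)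
    (hx : G.StarSupported a x) :
    G.phiList ε c (l.reverse.map G.rev) (G.phiList ε c l x) = x := by
  induction l generalizing a x with
  | nil => rfl
  | cons e t ih =>
    rw [List.reverse_cons, List.map_append, phiList_append]
    change G.phi ε c (G.rev e) (G.phiList ε c (t.reverse.map G.rev) (G.phiList ε c t _)) = x
    rw [ih hl.2 (G.starSupported_phi ε c e x)]
    exact phi_rev_phi hε hc (hl.1 ▸ hx)

theorem phiList_eq_of_isPath (hε : G.IsSignFunction ε) (hc : G.IsInvariantFunction ε c)
    {u w : V} {x : E → ℤ} (hxu : G.StarSupported u x)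
    (hx : ∀ l : List E, G.IsPath u u l → G.phiList ε c l x = x)
    {l l' : List E} (hl : G.IsPath u w l) (hl' : G.IsPath u w l') :
    G.phiList ε c l x = G.phiList ε c l' x := by
  have hloop : G.phiList ε c (l'.reverse.map G.rev) (G.phiList ε c l x) = x := by
    rw [← phiList_append]
    exact hx _ (hl.append hl'.reverse_map_rev)
  have := phiList_reverse_map_rev_phiList hε hc hl'.reverse_map_rev
    (G.starSupported_phiList ε c hl hxu)
  rwa [rev_map_reverse_rev_map_reverse, hloop, eq_comm] at this

theorem isAxialTuple_iff {f : V → E → ℤ} :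
    G.IsAxialTuple ε c f ↔
      (∀ v, G.StarSupported v (f v)) ∧ ∀ e, f (G.ter e) = G.phi ε c e (f (G.ini e)) := by
  refine and_congr_right fun hsupp => ⟨fun hf e => ?_, fun hf e e' h => ?_⟩
  · funext e''
    by_cases h : G.ini e'' = G.ter e
    · have hrev : G.ini e'' = G.ini (G.rev e) := h.trans (G.rev_ini e).symm
      have hini : G.ini (G.conn (G.rev e) e'') = G.ini e := by
        rw [G.conn_ini _ _ hrev, G.rev_ter]
      have hconn : G.conn e (G.conn (G.rev e) e'') = e'' := by
        simpa [G.rev_rev] using G.conn_inv (G.rev e) e'' hrev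
      simpa [phi, h, hconn] using hf e _ hini
    · simp [phi, h, hsupp _ e'' h]
  · rw [hf e, G.phi_conn ε c h]

theorem IsAxialTuple.phiList_eq {f : V → E → ℤ} (hf : G.IsAxialTuple ε c f) {a b : V}
    {l : List E} (hl : G.IsPath a b l) : G.phiList ε c l (f a) = f b := by
  induction l generalizing a with
  | nil => cases hl; rfl
  | cons e t ih =>
    obtain ⟨rfl, ht⟩ := hl
    change G.phiList ε c t (G.phi ε c e _) = f b
    rw [← (isAxialTuple_iff.mp hf).2 e]
    exact ih ht

theorem IsAxialTuple.ext (hconn : G.Connected) {u : V} {f g : V → E → ℤ}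
    (hf : G.IsAxialTuple ε c f) (hg : G.IsAxialTuple ε c g) (hu : f u = g u) : f = g := by
  funext v
  obtain ⟨l, hl⟩ := exists_isPath_of_reflTransGen (hconn u v)
  rw [← hf.phiList_eq hl, ← hg.phiList_eq hl, hu]

theorem exists_isAxialTuple_of_invariant (hconn : G.Connected) (hε : G.IsSignFunction ε)
    (hc : G.IsInvariantFunction ε c) {u : V} {x : E → ℤ} (hxu : G.StarSupported u x)
    (hx : ∀ l : List E, G.IsPath u u l → G.phiList ε c l x = x) :
    ∃ f, G.IsAxialTuple ε c f ∧ f u = x := by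
  choose p hp using fun v => exists_isPath_of_reflTransGen (hconn u v)
  have transport {w : V} {l : List E} (hl : G.IsPath u w l) :
      G.phiList ε c l x = G.phiList ε c (p w) x :=
    phiList_eq_of_isPath hε hc hxu hx hl (hp w)
  refine ⟨fun v => G.phiList ε c (p v) x, isAxialTuple_iff.mpr ⟨?_, fun e => ?_⟩, ?_⟩
  · exact fun v => G.starSupported_phiList ε c (hp v) hxu
  · have hpe : G.IsPath u (G.ter e) (p (G.ini e) ++ [e]) := (hp _).append ⟨rfl, rfl⟩
    rw [← transport hpe, phiList_append]
    rfl
  · exact (transport (show G.IsPath u u [] from rfl)).symm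

end ConnGraph

/-- The group structures on both sides are the pointwise ones, so the evaluation bijection is
a group isomorphism. -/
theorem axialFunctions_equiv_invariants {V E : Type*} (G : ConnGraph V E)
    (hconn : G.Connected) (ε c : E → E → ℤ)
    (hε : G.IsSignFunction ε) (hc : G.IsInvariantFunction ε c) (u : V) :
    ∃ Φ : {f : V → E → ℤ // G.IsAxialTuple ε c f} ≃
          {x : E → ℤ // G.StarSupported u x ∧
            ∀ l : List E, G.IsPath u u l → G.phiList ε c l x = x},
      ∀ f, (Φ f).1 = f.1 u := by
  let eval (f : {f : V → E → ℤ // G.IsAxialTuple ε c f}) :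
      {x : E → ℤ // G.StarSupported u x ∧
        ∀ l : List E, G.IsPath u u l → G.phiList ε c l x = x} :=
    ⟨f.1 u, f.2.1 u, fun _ hl => f.2.phiList_eq hl⟩
  have injective : Function.Injective eval := fun f g hfg =>
    Subtype.ext (f.2.ext hconn g.2 (congrArg Subtype.val hfg))
  have surjective : Function.Surjective eval := fun x => by
    obtain ⟨f, hf, hfu⟩ := ConnGraph.exists_isAxialTuple_of_invariant hconn hε hc x.2.1 x.2.2
    exact ⟨⟨f, hf⟩, Subtype.ext hfu⟩
  exact ⟨Equiv.ofBijective eval ⟨injective, surjective⟩, fun _ => rfl⟩
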